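/- arXiv:2110.12269 — 4 statements merged into one kernel-verified Lean document; each statement's English description precedes it below -/
import Mathlib

section
/- Let N = QR with gcd(Q,R) = 1, and let W_Q and W_Q' be two Atkin–Lehner operators on Γ₀(N) with the same data (r₀,u₀). Let γ = (a b; cN d) ∈ Γ₀(N) and define γ' := W_Q · γ · (W_Q')⁻¹. Then γ' has integer entries, determinant 1, its lower-left entry is divisible by N (so γ' ∈ Γ₀(N)), and its lower-right entry d' satisfies d' ≡ d (mod R) and d·d' ≡ 1 (mod Q). -/
/-- Let `N = QR` with `gcd(Q,R)=1`, and let `W_Q`, `W_Q'` be Atkin–Lehner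
operators on `Γ₀(N)` with the same data `(r₀,u₀)`. For `γ ∈ Γ₀(N)`, the matrix
`γ' = W_Q γ (W_Q')⁻¹` has integer entries, determinant 1, lower-left entry divisible by `N`
(so `γ' ∈ Γ₀(N)`), and its lower-right entry `d'` satisfies `d' ≡ d (mod R)` and
`d·d' ≡ 1 (mod Q)`. -/
theorem atkin_lehner_conjugation
    (N Q R : ℕ) (hQ : 0 < Q) (hR : 0 < R) (hN : N = Q * R) (hQR : Nat.Coprime Q R)
    (r₀ u₀ : ℤ) (hr₀ : IsCoprime r₀ (R : ℤ)) (hu₀ : IsCoprime u₀ (Q : ℤ))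
    (r t u v r' t' u' v' : ℤ)
    (W W' : Matrix (Fin 2) (Fin 2) ℤ)
    (hW : W = !![(Q : ℤ) * r, t; (N : ℤ) * u, (Q : ℤ) * v])
    (hW' : W' = !![(Q : ℤ) * r', t'; (N : ℤ) * u', (Q : ℤ) * v'])
    (hr : r ≡ r₀ [ZMOD (R : ℤ)]) (hu : u ≡ u₀ [ZMOD (Q : ℤ)])
    (hdet : (Q : ℤ) * r * v - (R : ℤ) * u * t = 1)
    (hr' : r' ≡ r₀ [ZMOD (R : ℤ)]) (hu' : u' ≡ u₀ [ZMOD (Q : ℤ)])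
    (hdet' : (Q : ℤ) * r' * v' - (R : ℤ) * u' * t' = 1)
    (γ : Matrix (Fin 2) (Fin 2) ℤ) (hγdet : γ.det = 1) (hγc : (N : ℤ) ∣ γ 1 0) :
    ∃ γ' : Matrix (Fin 2) (Fin 2) ℤ,
      W * γ = γ' * W' ∧
      γ'.det = 1 ∧
      (N : ℤ) ∣ γ' 1 0 ∧
      γ' 1 1 ≡ γ 1 1 [ZMOD (R : ℤ)] ∧
      γ 1 1 * γ' 1 1 ≡ 1 [ZMOD (Q : ℤ)] := by
  obtain ⟨c, hc⟩ := hγc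
  set a := γ 0 0 with ha
  set b := γ 0 1 with hb
  set d := γ 1 1 with hd
  have hNZ : (N : ℤ) = (Q : ℤ) * (R : ℤ) := by rw [hN]; push_cast; ring
  have hγeq : γ = !![a, b; (N : ℤ) * c, d] := by
    ext i j
    fin_cases i <;> fin_cases j <;> simp [ha, hb, hd, hc]
  have hγd : a * d - b * ((Q : ℤ) * (R : ℤ) * c) = 1 := by
    have h := hγdet
    rw [hγeq, Matrix.det_fin_two_of, hNZ] at h
    linarith [h]
  -- r ≡ r' (mod R) and u ≡ u' (mod Q)
  obtain ⟨k, hk⟩ : (R : ℤ) ∣ r' - r := (Int.modEq_iff_dvd.mp (hr.trans hr'.symm))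
  obtain ⟨m, hm⟩ : (Q : ℤ) ∣ u' - u := (Int.modEq_iff_dvd.mp (hu.trans hu'.symm))
  -- the conjugated matrix
  set g00 : ℤ := v' * ((Q:ℤ) * r * a + t * (R:ℤ) * c * (Q:ℤ)) - (R:ℤ) * u' * ((Q:ℤ) * r * b + t * d) with hg00
  set g01 : ℤ := -t' * (r * a + (R:ℤ) * t * c) + r' * ((Q:ℤ) * r * b + t * d) with hg01
  set g10 : ℤ := (Q:ℤ) * (R:ℤ) * (v' * (u * a + (Q:ℤ) * v * c) - u' * ((R:ℤ) * u * b + v * d)) with hg10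
  set g11 : ℤ := -(R:ℤ) * t' * (u * a + (Q:ℤ) * v * c) + r' * ((Q:ℤ) * (R:ℤ) * u * b + (Q:ℤ) * v * d) with hg11
  have hQ0 : (Q : ℤ) ≠ 0 := by exact_mod_cast hQ.ne'
  have hmul : W * γ = !![g00, g01; g10, g11] * W' := by
    rw [hW, hW', hγeq, hNZ]
    ext i j
    fin_cases i <;> fin_cases j <;>
      simp [Matrix.mul_apply, Fin.sum_univ_two]
    · linear_combination (-(Q:ℤ)*(r*a+(R:ℤ)*t*c)) * hdet'
    · linear_combination (-((Q:ℤ)*r*b+t*d)) * hdet'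
    · linear_combination (-(Q:ℤ)*(R:ℤ)*(u*a+(Q:ℤ)*v*c)) * hdet'
    · linear_combination (-(Q:ℤ)*((R:ℤ)*u*b+v*d)) * hdet'
  refine ⟨!![g00, g01; g10, g11], hmul, ?_, ?_, ?_, ?_⟩
  · -- determinant
    have hWdet : W.det = (Q : ℤ) := by
      rw [hW, Matrix.det_fin_two_of]
      linear_combination (Q:ℤ) * hdet + (-(t*u)) * hNZ
    have hW'det : W'.det = (Q : ℤ) := by
      rw [hW', Matrix.det_fin_two_of]
      linear_combination (Q:ℤ) * hdet' + (-(t'*u')) * hNZ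
    have h := congrArg Matrix.det hmul
    rw [Matrix.det_mul, Matrix.det_mul, hWdet, hW'det, hγdet, mul_one] at h
    have : (Q:ℤ) = (!![g00, g01; g10, g11] : Matrix (Fin 2) (Fin 2) ℤ).det * (Q:ℤ) := h
    have := mul_right_cancel₀ hQ0 (this.symm.trans (one_mul (Q:ℤ)).symm)
    simpa using this
  · refine ⟨v' * (u * a + (Q:ℤ) * v * c) - u' * ((R:ℤ) * u * b + v * d), ?_⟩
    show g10 = _
    rw [hg10, hNZ]
  · -- d' ≡ d (mod R)
    show g11 ≡ d [ZMOD (R:ℤ)]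
    rw [Int.modEq_iff_dvd]
    exact ⟨t'*(u*a+(Q:ℤ)*v*c) - (Q:ℤ)*r'*u*b - d*u*t - d*(Q:ℤ)*v*k, by
      rw [hg11]; linear_combination (-d) * hdet + (-((Q:ℤ)*v*d)) * hk⟩
  · -- d·d' ≡ 1 (mod Q)
    show d * g11 ≡ 1 [ZMOD (Q:ℤ)]
    rw [Int.modEq_iff_dvd]
    exact ⟨r'*v'*a*d - (R:ℤ)*b*c - (R:ℤ)*t'*m*a*d + (R:ℤ)*t'*v*c*d - (R:ℤ)*r'*u*b*d - r'*v*d^2, by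
      rw [hg11]; linear_combination (-(R:ℤ)*t'*a*d) * hm + (-(a*d)) * hdet' + (-1:ℤ) * hγd⟩
end

section
/- Let N = QR with gcd(Q,R) = 1, and let W_Q and W_Q' be two Atkin–Lehner operators on Γ₀(N) with the same data (r₀,u₀). Then α := W_Q · (W_Q')⁻¹ is an integer matrix of determinant 1 whose lower-left entry is divisible by N and whose diagonal entries are both congruent to 1 modulo N; that is, α ∈ Γ₁(N). -/
/-- Let `N = QR` with `gcd(Q,R)=1`, and let `W_Q`, `W_Q'` be two Atkin–Lehner
operators on `Γ₀(N)` with the same data `(r₀,u₀)`. Then `α := W_Q (W_Q')⁻¹` is an integer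
matrix of determinant 1 whose lower-left entry is divisible by `N` and whose diagonal entries
are both congruent to `1` modulo `N`; that is, `α ∈ Γ₁(N)`. -/
theorem atkin_lehner_ratio_in_Gamma1
    (N Q R : ℕ) (hQ : 0 < Q) (hR : 0 < R) (hN : N = Q * R) (hQR : Nat.Coprime Q R)
    (r₀ u₀ : ℤ) (hr₀ : IsCoprime r₀ (R : ℤ)) (hu₀ : IsCoprime u₀ (Q : ℤ))
    (r t u v r' t' u' v' : ℤ)
    (W W' : Matrix (Fin 2) (Fin 2) ℤ)
    (hW : W = !![(Q : ℤ) * r, t; (N : ℤ) * u, (Q : ℤ) * v])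
    (hW' : W' = !![(Q : ℤ) * r', t'; (N : ℤ) * u', (Q : ℤ) * v'])
    (hr : r ≡ r₀ [ZMOD (R : ℤ)]) (hu : u ≡ u₀ [ZMOD (Q : ℤ)])
    (hdet : (Q : ℤ) * r * v - (R : ℤ) * u * t = 1)
    (hr' : r' ≡ r₀ [ZMOD (R : ℤ)]) (hu' : u' ≡ u₀ [ZMOD (Q : ℤ)])
    (hdet' : (Q : ℤ) * r' * v' - (R : ℤ) * u' * t' = 1) :
    ∃ α : Matrix (Fin 2) (Fin 2) ℤ,
      W = α * W' ∧
      α.det = 1 ∧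
      (N : ℤ) ∣ α 1 0 ∧
      α 0 0 ≡ 1 [ZMOD (N : ℤ)] ∧
      α 1 1 ≡ 1 [ZMOD (N : ℤ)] := by
  obtain ⟨k, hk⟩ : (Q : ℤ) ∣ u' - u := (hu.trans hu'.symm).dvd
  obtain ⟨l, hl⟩ : (R : ℤ) ∣ r' - r := (hr.trans hr'.symm).dvd
  refine ⟨!![(Q : ℤ) * r * v' - (R : ℤ) * t * u', t * r' - r * t';
      (N : ℤ) * (u * v' - v * u'), (Q : ℤ) * r' * v - (R : ℤ) * u * t'], ?_, ?_, ?_, ?_, ?_⟩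
  · rw [hW, hW', Matrix.mul_fin_two]
    ext i j
    fin_cases i <;> fin_cases j <;> simp <;> push_cast [hN]
    · linear_combination -(Q : ℤ) * r * hdet'
    · linear_combination -t * hdet'
    · linear_combination -(Q : ℤ) * R * u * hdet'
    · linear_combination -(Q : ℤ) * v * hdet'
  · rw [Matrix.det_fin_two_of]
    push_cast [hN]
    linear_combination ((Q : ℤ) * r' * v' - R * u' * t') * hdet + hdet'
  · exact ⟨u * v' - v * u', by simp⟩
  · rw [show ((N : ℤ)) = (Q : ℤ) * R by push_cast [hN]; ring]
    rw [← Int.modEq_and_modEq_iff_modEq_mul (by simpa using hQR)]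
    constructor
    · rw [Int.modEq_iff_dvd]
      refine ⟨r * v - r * v' + (R : ℤ) * t * k, ?_⟩
      simp only [Matrix.cons_val', Matrix.cons_val_zero, Matrix.empty_val',
        Matrix.cons_val_fin_one, Matrix.of_apply]
      linear_combination -hdet + (R : ℤ) * t * hk
    · rw [Int.modEq_iff_dvd]
      refine ⟨(Q : ℤ) * v' * l + t * u' - u' * t', ?_⟩
      simp only [Matrix.cons_val', Matrix.cons_val_zero, Matrix.empty_val',
        Matrix.cons_val_fin_one, Matrix.of_apply]
      linear_combination -hdet' + (Q : ℤ) * v' * hl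
  · rw [show ((N : ℤ)) = (Q : ℤ) * R by push_cast [hN]; ring]
    rw [← Int.modEq_and_modEq_iff_modEq_mul (by simpa using hQR)]
    constructor
    · rw [Int.modEq_iff_dvd]
      refine ⟨r' * v' - r' * v - (R : ℤ) * t' * k, ?_⟩
      simp only [Matrix.cons_val', Matrix.cons_val_one, Matrix.head_cons, Matrix.empty_val',
        Matrix.cons_val_fin_one, Matrix.head_fin_const, Matrix.of_apply]
      linear_combination -hdet' - (R : ℤ) * t' * hk
    · rw [Int.modEq_iff_dvd]
      refine ⟨-((Q : ℤ) * v * l) + u * t' - u * t, ?_⟩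
      simp only [Matrix.cons_val', Matrix.cons_val_one, Matrix.head_cons, Matrix.empty_val',
        Matrix.cons_val_fin_one, Matrix.head_fin_const, Matrix.of_apply]
      linear_combination -hdet - (Q : ℤ) * v * hl
end

section
/- Suppose q₁ = 1 (so χ₁ is the trivial character and χ₂ is an even primitive character modulo q₂ > 1). Then for every b ∈ ℤ, the newform Dedekind sum of the upper triangular matrix (1 b; 0 1) is S_{1,χ₂}((1 b; 0 1)) = b·L(−1, conj(χ₂)). In particular, for b ≠ 0 this Dedekind sum is nonzero and depends on more than the first column of the matrix. -/
open Complex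

/-- Conjugate Dirichlet character. -/
noncomputable def conjChar {q : ℕ} (χ : DirichletCharacter ℂ q) : DirichletCharacter ℂ q :=
  χ.ringHomComp (starRingEnd ℂ)

/-- Gauss sum τ(χ) = Σ_{n mod q} χ(n) e^{2πin/q}. -/
noncomputable def gauss {q : ℕ} (χ : DirichletCharacter ℂ q) : ℂ :=
  ∑ n ∈ Finset.range q, χ (n : ZMod q) * Complex.exp (2 * Real.pi * Complex.I * n / q)

/-- The function F_{χ₁,χ₂}(z) = c₁z + c₀ + Σ_{n≥1} (Σ_{ab=n} χ₁(a) conj(χ₂)(b)/a) e(nz). -/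
noncomputable def Fcal {q₁ q₂ : ℕ} [NeZero q₁] [NeZero q₂]
    (χ₁ : DirichletCharacter ℂ q₁) (χ₂ : DirichletCharacter ℂ q₂) (z : ℂ) : ℂ :=
  (if q₁ = 1 then (Real.pi : ℂ) * Complex.I * (conjChar χ₂).LFunction (-1) else 0) * z
  + (if q₂ = 1 then (1 / 2 : ℂ) * χ₁.LFunction 1 else 0)
  + ∑' n : ℕ+,
      (∑ a ∈ (n : ℕ).divisors,
        χ₁ (a : ZMod q₁) * conjChar χ₂ ((((n : ℕ) / a : ℕ)) : ZMod q₂) / (a : ℂ))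
      * Complex.exp (2 * Real.pi * Complex.I * (n : ℕ) * z)

/-- Möbius action of an integer matrix on ℂ. -/
noncomputable def moeb (g : Matrix (Fin 2) (Fin 2) ℤ) (z : ℂ) : ℂ :=
  ((g 0 0 : ℂ) * z + (g 0 1 : ℂ)) / ((g 1 0 : ℂ) * z + (g 1 1 : ℂ))

/-- ψ(d) = χ₁(d) conj(χ₂)(d). -/
noncomputable def psiFun {q₁ q₂ : ℕ} (χ₁ : DirichletCharacter ℂ q₁)
    (χ₂ : DirichletCharacter ℂ q₂) (d : ℤ) : ℂ :=
  χ₁ (d : ZMod q₁) * conjChar χ₂ (d : ZMod q₂)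

/-- The newform Dedekind sum S_{χ₁,χ₂}(γ) = (τ(conj χ₁)/(πi)) φ_{χ₁,χ₂}(γ), where
φ is evaluated at the point z = i (it is independent of z). -/
noncomputable def Scal {q₁ q₂ : ℕ} [NeZero q₁] [NeZero q₂]
    (χ₁ : DirichletCharacter ℂ q₁) (χ₂ : DirichletCharacter ℂ q₂)
    (γ : Matrix (Fin 2) (Fin 2) ℤ) : ℂ :=
  gauss (conjChar χ₁) / ((Real.pi : ℂ) * Complex.I) *
    (Fcal χ₁ χ₂ (moeb γ Complex.I) - psiFun χ₁ χ₂ (γ 1 1) * Fcal χ₁ χ₂ Complex.I)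

section Aux
open DirichletCharacter

open DirichletCharacter

lemma conjChar_isPrimitive {q : ℕ} [NeZero q] {χ : DirichletCharacter ℂ q}
    (h : χ.IsPrimitive) : (conjChar χ).IsPrimitive := by
  have hker : (conjChar χ).toUnitHom.ker = χ.toUnitHom.ker := by
    ext x
    simp only [MonoidHom.mem_ker, ← Units.val_eq_one, MulChar.coe_toUnitHom]
    show conjChar χ ↑x = 1 ↔ χ ↑x = 1
    simp only [conjChar, MulChar.ringHomComp_apply]
    exact map_eq_one_iff _ (RingHom.injective _)
  have hset : (conjChar χ).conductorSet = χ.conductorSet := by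
    ext d
    simp only [mem_conductorSet_iff]
    constructor <;> intro hf <;> obtain hd := hf.dvd
    · rw [factorsThrough_iff_ker_unitsMap hd] at hf ⊢
      rwa [hker] at hf
    · rw [factorsThrough_iff_ker_unitsMap hd] at hf ⊢
      rwa [hker]
  unfold DirichletCharacter.IsPrimitive DirichletCharacter.conductor at *
  rw [hset, h]

lemma gaussSum_ne_zero_aux {q : ℕ} [NeZero q] {χ : DirichletCharacter ℂ q}
    (h : χ.IsPrimitive) : gaussSum χ ZMod.stdAddChar ≠ 0 := by
  intro h0
  have hF : ∀ k, ZMod.dft χ k = 0 := by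
    intro k
    rw [h.fourierTransform_eq_inv_mul_gaussSum, h0, mul_zero]
  have h2 := congrFun (ZMod.dft_dft (N := q) χ) (-1)
  rw [ZMod.dft_apply] at h2
  simp only [hF, smul_zero, Finset.sum_const_zero] at h2
  rw [neg_neg, map_one, smul_eq_mul, mul_one] at h2
  exact NeZero.ne (q : ℂ) h2.symm

lemma LFunction_neg_one_ne_zero_aux {q : ℕ} [NeZero q] (hq : 1 < q)
    {χ : DirichletCharacter ℂ q} (h : χ.IsPrimitive) (heven : χ.Even) :
    χ.LFunction (-1) ≠ 0 := by
  have hq0 : (q : ℂ) ≠ 0 := by exact_mod_cast (Nat.pos_of_ne_zero (NeZero.ne q)).ne'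
  have h2 : χ⁻¹.LFunction 2 ≠ 0 :=
    LFunction_ne_zero_of_one_le_re χ⁻¹ (.inr (by norm_num)) (by norm_num)
  have hc2 : χ⁻¹.completedLFunction 2 ≠ 0 := by
    intro h0
    apply h2
    rw [LFunction_eq_completed_div_gammaFactor _ _ (.inl two_ne_zero), h0, zero_div]
  have hfe := h.completedLFunction_one_sub 2
  have hc : χ.completedLFunction (-1) ≠ 0 := by
    rw [show (-1 : ℂ) = 1 - 2 by norm_num, hfe]
    refine mul_ne_zero (mul_ne_zero ?_ ?_) hc2
    · simp only [Ne, cpow_eq_zero_iff, not_and_or]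
      exact .inl hq0
    · rw [rootNumber]
      refine div_ne_zero (div_ne_zero (gaussSum_ne_zero_aux h) ?_) ?_
      · split_ifs <;> simp
      · simp only [Ne, cpow_eq_zero_iff, not_and_or]
        exact .inl hq0
  rw [LFunction_eq_completed_div_gammaFactor _ _ (.inl (by norm_num))]
  refine div_ne_zero hc ?_
  rw [heven.gammaFactor_def, Ne, Gammaℝ_eq_zero_iff]
  push_neg
  intro n hn
  have h1 := congrArg Complex.re hn
  simp only [neg_re, one_re, mul_re, ofReal_re, natCast_re] at h1
  norm_num at h1
  have : (2 * n : ℕ) = 1 := by exact_mod_cast h1.symm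
  omega

end Aux

/-- Suppose q₁ = 1 (so χ₁ is trivial and χ₂ is an even primitive character
modulo q₂ > 1). Then for every b ∈ ℤ, S_{1,χ₂}((1 b; 0 1)) = b·L(−1, conj(χ₂)); in
particular, for b ≠ 0 this Dedekind sum is nonzero. -/
theorem dedekind_sum_upper_triangular_trivial_chi1
    (q₂ : ℕ) [NeZero q₂] (hq₂ : 1 < q₂)
    (χ₁ : DirichletCharacter ℂ 1) (χ₂ : DirichletCharacter ℂ q₂)
    (hprim₂ : χ₂.IsPrimitive) (heven : χ₂ (-1) = 1)
    (b : ℤ) :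
    Scal χ₁ χ₂ !![1, b; 0, 1] = (b : ℂ) * (conjChar χ₂).LFunction (-1)
      ∧ (b ≠ 0 → Scal χ₁ χ₂ !![1, b; 0, 1] ≠ 0) := by
  have hπ : ((Real.pi : ℂ) * Complex.I) ≠ 0 :=
    mul_ne_zero (ofReal_ne_zero.mpr Real.pi_ne_zero) I_ne_zero
  have hLne : (conjChar χ₂).LFunction (-1) ≠ 0 := by
    refine LFunction_neg_one_ne_zero_aux hq₂ (conjChar_isPrimitive hprim₂) ?_
    show conjChar χ₂ (-1) = 1
    simp [conjChar, MulChar.ringHomComp_apply, heven]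
  have hg : gauss (conjChar χ₁) = 1 := by
    simp [gauss, Subsingleton.elim ((0 : ℕ) : ZMod 1) 1]
  have hmoeb : moeb !![1, b; 0, 1] Complex.I = Complex.I + b := by
    simp [moeb]
  have hpsi : psiFun χ₁ χ₂ (!![1, b; 0, 1] 1 1) = 1 := by
    simp [psiFun]
  set L := (conjChar χ₂).LFunction (-1) with hL
  have hF : ∀ z : ℂ, Fcal χ₁ χ₂ z =
      (Real.pi : ℂ) * Complex.I * L * z
      + ∑' n : ℕ+,
        (∑ a ∈ (n : ℕ).divisors,
          χ₁ (a : ZMod 1) * conjChar χ₂ ((((n : ℕ) / a : ℕ)) : ZMod q₂) / (a : ℂ))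
        * Complex.exp (2 * Real.pi * Complex.I * (n : ℕ) * z) := by
    intro z
    rw [Fcal, if_pos rfl, if_neg (by omega)]
    ring
  have hexp : ∀ n : ℕ+, Complex.exp (2 * Real.pi * Complex.I * ((n : ℕ) : ℂ) * (Complex.I + b))
      = Complex.exp (2 * Real.pi * Complex.I * ((n : ℕ) : ℂ) * Complex.I) := by
    intro n
    rw [mul_add, Complex.exp_add]
    have h : (2 * (Real.pi : ℂ) * Complex.I * ((n : ℕ) : ℂ) * (b : ℂ))
        = (((n : ℕ) * b : ℤ) : ℂ) * (2 * Real.pi * Complex.I) := by push_cast; ring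
    rw [h, Complex.exp_int_mul_two_pi_mul_I, mul_one]
  have hval : Scal χ₁ χ₂ !![1, b; 0, 1] = (b : ℂ) * L := by
    rw [Scal, hg, hmoeb, hpsi, one_mul, hF, hF]
    simp only [hexp]
    field_simp
    ring
  refine ⟨hval, fun hb ↦ ?_⟩
  rw [hval]
  exact mul_ne_zero (Int.cast_ne_zero.mpr hb) hLne
end

section
/- Let χ be an even primitive Dirichlet character modulo q with q > 1. Then q²·L(2,χ)/(2πi·τ(χ)) = πi·L(−1, conj(χ)); equivalently, q²·L(2,χ) = −2π²·τ(χ)·L(−1, conj(χ)). -/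
open Complex
open scoped ZMod

/-!
Apply the functional equation `Λ(1 - s, χ) = N ^ (s - 1/2) ε(χ) Λ(s, χ⁻¹)` of the completed
L-function at `s = -1`. For even `χ` the gamma factor is `Γℝ(s) = π ^ (-s/2) Γ(s/2)`, with
`Γℝ(2) = π⁻¹` and `Γℝ(-1) = -2π`, and the root number is `τ(χ) / √N`; clearing these factors gives
`N² L(2, χ) = -2π² τ(χ) L(-1, χ⁻¹)`, and `χ⁻¹ = χ̄` since `χ` takes values on the unit circle.
The first identity follows by dividing by `τ(χ)`, which is nonzero for primitive `χ`.
-/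

lemma conjChar_eq_inv {q : ℕ} (χ : DirichletCharacter ℂ q) : conjChar χ = χ⁻¹ := by
  refine MulChar.ext fun a ↦ ?_
  rw [MulChar.inv_apply_eq_inv', RCLike.inv_eq_conj (χ.unit_norm_eq_one a)]
  rfl

lemma gauss_eq_gaussSum_stdAddChar {q : ℕ} [NeZero q] (χ : DirichletCharacter ℂ q) :
    gauss χ = gaussSum χ ZMod.stdAddChar := by
  refine Finset.sum_nbij' (fun n ↦ (n : ZMod q)) ZMod.val (fun _ _ ↦ Finset.mem_univ _)
    (fun a _ ↦ Finset.mem_range.mpr a.val_lt)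
    (fun n hn ↦ ZMod.val_natCast_of_lt (Finset.mem_range.mp hn))
    (fun a _ ↦ ZMod.natCast_zmod_val a) fun n _ ↦ ?_
  rw [ZMod.stdAddChar_apply, ZMod.toCircle_natCast]

namespace Complex

lemma Gammaℝ_two : Gammaℝ 2 = (Real.pi : ℂ)⁻¹ := by
  rw [Gammaℝ_def]
  norm_num [Gamma_one, cpow_neg_one]

lemma Gammaℝ_neg_one : Gammaℝ (-1) = -2 * (Real.pi : ℂ) := by
  have h := Gammaℝ_add_two (s := -1) (by norm_num)
  rw [show (-1 : ℂ) + 2 = 1 by ring, Gammaℝ_one] at h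
  have hπ : (Real.pi : ℂ) ≠ 0 := ofReal_ne_zero.mpr Real.pi_ne_zero
  rw [div_div, eq_div_iff (mul_ne_zero two_ne_zero hπ)] at h
  linear_combination h

end Complex

namespace DirichletCharacter

variable {N : ℕ}

lemma Even.inv {S : Type*} [CommRing S] {χ : DirichletCharacter S N} (hχ : χ.Even) :
    χ⁻¹.Even := by
  rw [DirichletCharacter.Even, MulChar.inv_apply_eq_inv, hχ, Ring.inverse_one]

variable [NeZero N]

lemma Even.completedLFunction_two {χ : DirichletCharacter ℂ N} (hχ : χ.Even) :
    completedLFunction χ 2 = LFunction χ 2 / Real.pi := by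
  rw [LFunction_eq_completed_div_gammaFactor χ 2 (Or.inl two_ne_zero), hχ.gammaFactor_def,
    Gammaℝ_two, div_inv_eq_mul, mul_div_cancel_right₀ _ (ofReal_ne_zero.mpr Real.pi_ne_zero)]

lemma Even.completedLFunction_neg_one {χ : DirichletCharacter ℂ N} (hχ : χ.Even) :
    completedLFunction χ (-1) = -2 * Real.pi * LFunction χ (-1) := by
  have hΓ : -2 * (Real.pi : ℂ) ≠ 0 := by simp [Real.pi_ne_zero]
  rw [LFunction_eq_completed_div_gammaFactor χ (-1) (Or.inl (by norm_num)), hχ.gammaFactor_def,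
    Gammaℝ_neg_one, mul_div_cancel₀ _ hΓ]

/-- By Fourier inversion, `τ(χ) = 0` would make the Fourier transform of `χ` vanish, hence `χ`. -/
lemma IsPrimitive.gaussSum_stdAddChar_ne_zero {χ : DirichletCharacter ℂ N} (hχ : χ.IsPrimitive) :
    gaussSum χ ZMod.stdAddChar ≠ 0 := by
  intro hτ
  have hF : 𝓕 (χ : ZMod N → ℂ) = 0 := by
    funext k
    rw [hχ.fourierTransform_eq_inv_mul_gaussSum, hτ, mul_zero, Pi.zero_apply]
  have h := congrFun (ZMod.dft_dft (χ : ZMod N → ℂ)) (-1)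
  simp only [hF, map_zero, Pi.zero_apply, neg_neg, map_one, smul_eq_mul, mul_one] at h
  exact NeZero.ne (N : ℂ) h.symm

lemma IsPrimitive.LFunction_two_of_even {χ : DirichletCharacter ℂ N} (hχ : χ.IsPrimitive)
    (heven : χ.Even) :
    (N : ℂ) ^ 2 * LFunction χ 2
      = -2 * (Real.pi : ℂ) ^ 2 * gaussSum χ ZMod.stdAddChar * LFunction χ⁻¹ (-1) := by
  have hN : (N : ℂ) ≠ 0 := NeZero.ne _
  have hpow : (N : ℂ) ^ 2 * ((N : ℂ) ^ ((-1 : ℂ) - 1 / 2) / (N : ℂ) ^ (1 / 2 : ℂ)) = 1 := by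
    rw [← cpow_sub _ _ hN, show (-1 : ℂ) - 1 / 2 - 1 / 2 = -(2 : ℕ) by norm_num, cpow_neg,
      cpow_natCast, mul_inv_cancel₀ (pow_ne_zero 2 hN)]
  have hfe := hχ.completedLFunction_one_sub (-1)
  rw [show (1 : ℂ) - -1 = 2 by ring, heven.completedLFunction_two,
    heven.inv.completedLFunction_neg_one, rootNumber, if_pos heven, pow_zero, div_one,
    div_eq_iff (ofReal_ne_zero.mpr Real.pi_ne_zero)] at hfe
  linear_combination (N : ℂ) ^ 2 * hfe
    + (-2 * (Real.pi : ℂ) ^ 2 * gaussSum χ ZMod.stdAddChar * LFunction χ⁻¹ (-1)) * hpow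

end DirichletCharacter

theorem functional_equation_c1_general
    (q : ℕ) [NeZero q]
    (χ : DirichletCharacter ℂ q) (hprim : χ.IsPrimitive) (heven : χ (-1) = 1) :
    (q : ℂ) ^ 2 * χ.LFunction 2 / (2 * (Real.pi : ℂ) * Complex.I * gauss χ)
      = (Real.pi : ℂ) * Complex.I * (conjChar χ).LFunction (-1)
    ∧ (q : ℂ) ^ 2 * χ.LFunction 2
      = -2 * (Real.pi : ℂ) ^ 2 * gauss χ * (conjChar χ).LFunction (-1) := by
  have hL : (q : ℂ) ^ 2 * χ.LFunction 2
      = -2 * (Real.pi : ℂ) ^ 2 * gauss χ * (conjChar χ).LFunction (-1) := by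
    rw [conjChar_eq_inv, gauss_eq_gaussSum_stdAddChar]
    exact hprim.LFunction_two_of_even heven
  have hτ : gauss χ ≠ 0 := gauss_eq_gaussSum_stdAddChar χ ▸ hprim.gaussSum_stdAddChar_ne_zero
  refine ⟨?_, hL⟩
  rw [hL, div_eq_iff (by simp [hτ, Real.pi_ne_zero, I_ne_zero])]
  linear_combination (-2 * (Real.pi : ℂ) ^ 2 * gauss χ * (conjChar χ).LFunction (-1)) * I_sq

/-- Let χ be an even primitive Dirichlet character modulo q with q > 1.
Then q²·L(2,χ)/(2πi·τ(χ)) = πi·L(−1, conj(χ)); equivalently,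
q²·L(2,χ) = −2π²·τ(χ)·L(−1, conj(χ)). -/
theorem functional_equation_c1
    (q : ℕ) [NeZero q] (hq : 1 < q)
    (χ : DirichletCharacter ℂ q) (hprim : χ.IsPrimitive) (heven : χ (-1) = 1) :
    (q : ℂ) ^ 2 * χ.LFunction 2 / (2 * (Real.pi : ℂ) * Complex.I * gauss χ)
      = (Real.pi : ℂ) * Complex.I * (conjChar χ).LFunction (-1)
    ∧ (q : ℂ) ^ 2 * χ.LFunction 2
      = -2 * (Real.pi : ℂ) ^ 2 * gauss χ * (conjChar χ).LFunction (-1) :=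
  functional_equation_c1_general q χ hprim heven
end
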